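/- In the Poincaré disc model, the hyperbolic distance between points x1=(r1,φ1), x2=(r2,φ2) in Euclidean polar coordinates equals ln((1+A)/(1−A)), where A² = 1 − 8/((2−β²)(t+1/t)² + β²(s+1/s)²), with β² = 1 − cos(φ1−φ2), s² = e^{ρ1+ρ2}, t² = e^{ρ1−ρ2}, and ρi the hyperbolic distance of xi from the origin. -/

import Mathlib

/-!
Put `a = ‖1 - x1 * conj x2‖` and `b = ‖x1 - x2‖`; the left side is `log ((1 + b/a) / (1 - b/a))`,
so it suffices to show `A = b / a`. With `ri = tanh (ρi / 2)` and `c = cos (arg x1 - arg x2)`,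
`b² = r1² + r2² - 2 r1 r2 c` and `a² = 1 + r1² r2² - 2 r1 r2 c`. Writing `α = ρ1 / 2`, `β = ρ2 / 2`,
the addition formulas for `cosh` turn the denominator in `A` into
`8 cosh² α cosh² β · a²`, and `1 / (cosh² α cosh² β) = (1 - r1²)(1 - r2²) = a² - b²`,
whence `A² = 1 - (a² - b²) / a² = b² / a²`.
-/

noncomputable section

/-- The quantity `A` with `A² = 1 - 8 / ((2 - β²)(t + 1/t)² + β²(s + 1/s)²)`,
where `β² = 1 - cos φ`, `s² = e^{ρ1+ρ2}`, `t² = e^{ρ1-ρ2}`. -/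
noncomputable def Aval (ρ1 ρ2 φ : ℝ) : ℝ :=
  Real.sqrt (1 - 8 /
    ((2 - (1 - Real.cos φ)) *
        (Real.exp ((ρ1 - ρ2) / 2) + 1 / Real.exp ((ρ1 - ρ2) / 2)) ^ 2 +
      (1 - Real.cos φ) *
        (Real.exp ((ρ1 + ρ2) / 2) + 1 / Real.exp ((ρ1 + ρ2) / 2)) ^ 2))

open Real ComplexConjugate

lemma Real.tanh_half_eq (x : ℝ) : tanh (x / 2) = (exp x - 1) / (exp x + 1) := by
  have hx : exp x = exp (x / 2) ^ 2 := by rw [← exp_nat_mul]; ring_nf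
  rw [tanh_eq_sinh_div_cosh, sinh_eq, cosh_eq, hx, exp_neg]
  field_simp

lemma Real.exp_add_one_div_exp (x : ℝ) : exp x + 1 / exp x = 2 * cosh x := by
  rw [cosh_eq, exp_neg, one_div]; ring

lemma Real.one_sub_tanh_sq (x : ℝ) : 1 - tanh x ^ 2 = 1 / cosh x ^ 2 := by
  rw [tanh_eq_sinh_div_cosh, div_pow, one_sub_div (pow_pos (cosh_pos x) 2).ne',
    cosh_sq_sub_sinh_sq]

lemma Real.one_add_mul_sq_sub_two_mul_mul_cos_pos {a b : ℝ} (ha : |a| < 1) (hb : |b| < 1)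
    (φ : ℝ) : 0 < 1 + (a * b) ^ 2 - 2 * a * b * cos φ := by
  have hlt : a * b * cos φ < 1 := by
    refine (le_abs_self _).trans_lt ?_
    rw [abs_mul, abs_mul]
    exact mul_lt_one_of_nonneg_of_lt_one_left (by positivity)
      (mul_lt_one_of_nonneg_of_lt_one_left (abs_nonneg a) ha hb.le) (abs_cos_le_one φ)
  calc 0 < (1 - a * b * cos φ) ^ 2 + (a * b * sin φ) ^ 2 := by
        have := sub_pos.2 hlt; positivity
    _ = 1 + (a * b) ^ 2 - 2 * a * b * cos φ := by
        linear_combination (a * b) ^ 2 * sin_sq_add_cos_sq φ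

lemma Complex.re_mul_conj_eq_norm_mul_norm_mul_cos (z w : ℂ) :
    (z * conj w).re = ‖z‖ * ‖w‖ * Real.cos (arg z - arg w) := by
  rw [Real.cos_sub, mul_re, conj_re, conj_im, ← norm_mul_cos_arg z, ← norm_mul_cos_arg w,
    ← norm_mul_sin_arg z, ← norm_mul_sin_arg w]
  ring

lemma Complex.sq_norm_sub_polar (z w : ℂ) :
    ‖z - w‖ ^ 2 = ‖z‖ ^ 2 + ‖w‖ ^ 2 - 2 * ‖z‖ * ‖w‖ * Real.cos (arg z - arg w) := by
  rw [Complex.sq_norm, Complex.sq_norm, Complex.sq_norm, normSq_sub,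
    re_mul_conj_eq_norm_mul_norm_mul_cos]
  ring

lemma Complex.sq_norm_one_sub_mul_conj_polar (z w : ℂ) :
    ‖1 - z * conj w‖ ^ 2 = 1 + (‖z‖ * ‖w‖) ^ 2 - 2 * ‖z‖ * ‖w‖ * Real.cos (arg z - arg w) := by
  rw [Complex.sq_norm, normSq_sub, normSq_one, one_mul, conj_re,
    re_mul_conj_eq_norm_mul_norm_mul_cos, normSq_mul, normSq_conj, ← Complex.sq_norm,
    ← Complex.sq_norm]
  ring

lemma Aval_eq_sqrt_tanh (ρ1 ρ2 φ : ℝ) :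
    Aval ρ1 ρ2 φ = √((tanh (ρ1 / 2) ^ 2 + tanh (ρ2 / 2) ^ 2
        - 2 * tanh (ρ1 / 2) * tanh (ρ2 / 2) * cos φ) /
      (1 + (tanh (ρ1 / 2) * tanh (ρ2 / 2)) ^ 2 - 2 * tanh (ρ1 / 2) * tanh (ρ2 / 2) * cos φ)) := by
  have hD : (2 - (1 - cos φ)) * (exp ((ρ1 - ρ2) / 2) + 1 / exp ((ρ1 - ρ2) / 2)) ^ 2 +
      (1 - cos φ) * (exp ((ρ1 + ρ2) / 2) + 1 / exp ((ρ1 + ρ2) / 2)) ^ 2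
      = 8 * (cosh (ρ1 / 2) * cosh (ρ2 / 2)) ^ 2 * (1 + (tanh (ρ1 / 2) * tanh (ρ2 / 2)) ^ 2
        - 2 * tanh (ρ1 / 2) * tanh (ρ2 / 2) * cos φ) := by
    rw [exp_add_one_div_exp, exp_add_one_div_exp, sub_div, add_div, cosh_sub, cosh_add,
      tanh_eq_sinh_div_cosh, tanh_eq_sinh_div_cosh]
    field_simp
    ring
  have hcosh : 1 / (cosh (ρ1 / 2) * cosh (ρ2 / 2)) ^ 2
      = (1 - tanh (ρ1 / 2) ^ 2) * (1 - tanh (ρ2 / 2) ^ 2) := by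
    rw [one_sub_tanh_sq, one_sub_tanh_sq]; ring
  have hY := one_add_mul_sq_sub_two_mul_mul_cos_pos (abs_tanh_lt_one (ρ1 / 2))
    (abs_tanh_lt_one (ρ2 / 2)) φ
  rw [Aval, hD]
  set C := cosh (ρ1 / 2) * cosh (ρ2 / 2)
  set t1 := tanh (ρ1 / 2)
  set t2 := tanh (ρ2 / 2)
  congr 1
  rw [show 8 / (8 * C ^ 2 * (1 + (t1 * t2) ^ 2 - 2 * t1 * t2 * cos φ))
      = 1 / C ^ 2 / (1 + (t1 * t2) ^ 2 - 2 * t1 * t2 * cos φ) by field_simp, hcosh,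
    eq_div_iff hY.ne', sub_mul, div_mul_cancel₀ _ hY.ne']
  ring

theorem poincare_distance_formula_general (x1 x2 : ℂ)
    (h1 : ‖x1‖ < 1) (h2 : ‖x2‖ < 1)
    (ρ1 ρ2 : ℝ)
    (hr1 : ‖x1‖ = (Real.exp ρ1 - 1) / (Real.exp ρ1 + 1))
    (hr2 : ‖x2‖ = (Real.exp ρ2 - 1) / (Real.exp ρ2 + 1)) :
    Real.log ((‖1 - x1 * (starRingEnd ℂ) x2‖ + ‖x1 - x2‖) /
        (‖1 - x1 * (starRingEnd ℂ) x2‖ - ‖x1 - x2‖)) =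
      Real.log ((1 + Aval ρ1 ρ2 (Complex.arg x1 - Complex.arg x2)) /
        (1 - Aval ρ1 ρ2 (Complex.arg x1 - Complex.arg x2))) := by
  rw [← tanh_half_eq] at hr1 hr2
  have ha : ‖1 - x1 * conj x2‖ ≠ 0 := by
    refine norm_ne_zero_iff.mpr (sub_ne_zero.mpr (ne_of_apply_ne norm ?_))
    rw [norm_one, norm_mul, Complex.norm_conj]
    exact (mul_lt_one_of_nonneg_of_lt_one_left (norm_nonneg x1) h1 h2.le).ne'
  rw [Aval_eq_sqrt_tanh, ← hr1, ← hr2, ← Complex.sq_norm_sub_polar,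
    ← Complex.sq_norm_one_sub_mul_conj_polar, ← div_pow, sqrt_sq (by positivity),
    one_add_div ha, one_sub_div ha, div_div_div_cancel_right₀ ha]

/-- in the Poincaré unit disc model, the hyperbolic distance
`ln[(|1 - x1 conj x2| + |x1 - x2|) / (|1 - x1 conj x2| - |x1 - x2|)]` between
`x1 = (r1, φ1)` and `x2 = (r2, φ2)` equals `ln((1 + A)/(1 - A))`, where
`ρi` is the hyperbolic distance of `xi` from the origin, i.e.
`ri = (e^{ρi} - 1)/(e^{ρi} + 1)`. -/
theorem poincare_distance_formula (x1 x2 : ℂ)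
    (h1 : ‖x1‖ < 1) (h2 : ‖x2‖ < 1)
    (ρ1 ρ2 : ℝ) (hρ1 : 0 ≤ ρ1) (hρ2 : 0 ≤ ρ2)
    (hr1 : ‖x1‖ = (Real.exp ρ1 - 1) / (Real.exp ρ1 + 1))
    (hr2 : ‖x2‖ = (Real.exp ρ2 - 1) / (Real.exp ρ2 + 1)) :
    Real.log ((‖1 - x1 * (starRingEnd ℂ) x2‖ + ‖x1 - x2‖) /
        (‖1 - x1 * (starRingEnd ℂ) x2‖ - ‖x1 - x2‖)) =
      Real.log ((1 + Aval ρ1 ρ2 (Complex.arg x1 - Complex.arg x2)) /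
        (1 - Aval ρ1 ρ2 (Complex.arg x1 - Complex.arg x2))) :=
  poincare_distance_formula_general x1 x2 h1 h2 ρ1 ρ2 hr1 hr2
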